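/- Every bounded set of diameter δ in ℍ^d is contained in a complete set of diameter δ. -/
import Mathlib


noncomputable section

namespace HypSpace

/-- Inverse hyperbolic cosine. -/
def arcosh (x : ℝ) : ℝ := Real.log (x + Real.sqrt (x ^ 2 - 1))

/-- The Minkowski bilinear form on `ℝ^{d+1}` (signature `(d,1)`, the last
coordinate being timelike). -/
def mink (d : ℕ) (x y : EuclideanSpace ℝ (Fin (d + 1))) : ℝ :=
  (∑ i : Fin d, x i.castSucc * y i.castSucc) - x (Fin.last d) * y (Fin.last d)

/-- The hyperboloid model of `d`-dimensional hyperbolic space: the upper sheet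
of the two-sheeted hyperboloid `mink x x = -1`. -/
def Pt (d : ℕ) : Type := {x : EuclideanSpace ℝ (Fin (d + 1)) // mink d x x = -1 ∧ 0 < x (Fin.last d)}

variable {d : ℕ}

/-- Hyperbolic distance between two points of `ℍ^d`. -/
def hdist (p q : Pt d) : ℝ := arcosh (-(mink d p.1 q.1))

/-- The geodesic segment between `a` and `b`, described metrically via betweenness
(hyperbolic space is uniquely geodesic). -/
def seg (a b : Pt d) : Set (Pt d) := {p | hdist a p + hdist p b = hdist a b}

/-- A set is (geodesically) convex if it contains the segment between any two of its points. -/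
def IsConvexSet (C : Set (Pt d)) : Prop := ∀ a ∈ C, ∀ b ∈ C, seg a b ⊆ C

/-- The convex hull: the smallest convex set containing `A`. -/
def chull (A : Set (Pt d)) : Set (Pt d) := ⋂₀ {C | IsConvexSet C ∧ A ⊆ C}

/-- The totally geodesic hyperplane with (spacelike) normal vector `v`. -/
def plane (v : EuclideanSpace ℝ (Fin (d + 1))) : Set (Pt d) := {p | mink d v p.1 = 0}

/-- A hyperplane of `ℍ^d`: the trace on the hyperboloid of a linear hyperplane
with spacelike unit normal. -/
def IsHyperplane (H : Set (Pt d)) : Prop := ∃ v, mink d v v = 1 ∧ H = plane v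

/-- Distance from a point to a set. -/
def distPS (p : Pt d) (S : Set (Pt d)) : ℝ := sInf (hdist p '' S)

/-- Distance between two sets. -/
def distSS (A B : Set (Pt d)) : ℝ := sInf {r | ∃ a ∈ A, ∃ b ∈ B, hdist a b = r}

/-- `h` is the orthogonal projection of `g` onto `H`: the point of `H`
realizing the distance from `g` to `H`.  For a hyperplane `H` with `a ∈ H`,
`IsProj b H a` also expresses that `H` is orthogonal to the segment `ab` at `a`. -/
def IsProj (g : Pt d) (H : Set (Pt d)) (h : Pt d) : Prop :=
  h ∈ H ∧ ∀ k ∈ H, hdist g h ≤ hdist g k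

/-- Two hyperplanes are ultraparallel if they are disjoint and not asymptotically
parallel (their distance is positive, i.e. they admit a common perpendicular). -/
def Ultraparallel (H J : Set (Pt d)) : Prop :=
  IsHyperplane H ∧ IsHyperplane J ∧ H ∩ J = ∅ ∧ 0 < distSS H J

/-- `p` is an interior point of `C`. -/
def IsIntr (C : Set (Pt d)) (p : Pt d) : Prop := ∃ ε > 0, ∀ q, hdist p q < ε → q ∈ C

/-- `p` is a boundary point of the (closed) set `C`. -/
def IsBdry (C : Set (Pt d)) (p : Pt d) : Prop := p ∈ C ∧ ¬ IsIntr C p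

/-- `C` is bounded. -/
def IsBddSet (C : Set (Pt d)) : Prop := ∃ R, ∀ a ∈ C, ∀ b ∈ C, hdist a b ≤ R

/-- `C` is closed. -/
def IsClosedSet (C : Set (Pt d)) : Prop :=
  ∀ p : Pt d, (∀ ε > 0, ∃ q ∈ C, hdist p q < ε) → p ∈ C

/-- A convex body: a compact (closed and bounded) convex set with nonempty interior. -/
def IsBody (C : Set (Pt d)) : Prop :=
  IsConvexSet C ∧ IsBddSet C ∧ IsClosedSet C ∧ ∃ p, IsIntr C p

/-- The hyperplane `H` supports `C`: it meets `C` but misses its interior. -/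
def Supports (H C : Set (Pt d)) : Prop :=
  IsHyperplane H ∧ (H ∩ C).Nonempty ∧ ∀ p, IsIntr C p → p ∉ H

/-- The width of `C` determined by `H`, as the maximum distance from `H`
to a point of `C`. -/
def width (H C : Set (Pt d)) : ℝ := sSup ((fun c => distPS c H) '' C)

/-- The width of `C` determined by `H`, as the distance from `H` to a farthest
supporting hyperplane of `C` ultraparallel to `H`. -/
def widthUP (H C : Set (Pt d)) : ℝ :=
  sSup {r | ∃ J, Supports J C ∧ Ultraparallel H J ∧ distSS H J = r}

/-- The thickness of `C`: the minimum width over supporting hyperplanes. -/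
def thickness (C : Set (Pt d)) : ℝ := sInf {r | ∃ H, Supports H C ∧ width H C = r}

/-- The diameter of `C`. -/
def diam (C : Set (Pt d)) : ℝ := sSup {r | ∃ a ∈ C, ∃ b ∈ C, hdist a b = r}

/-- A body of constant width `δ`. -/
def ConstWidth (W : Set (Pt d)) (δ : ℝ) : Prop :=
  IsBody W ∧ ∀ H, Supports H W → width H W = δ

/-- A complete set of diameter `δ`. -/
def CompleteSet (C : Set (Pt d)) (δ : ℝ) : Prop :=
  diam C = δ ∧ ∀ x, x ∉ C → diam (C ∪ {x}) > δ

/-- A body of constant diameter `δ`. -/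
def ConstDiam (C : Set (Pt d)) (δ : ℝ) : Prop :=
  diam C = δ ∧ ∀ p, IsBdry C p → ∃ p' ∈ C, hdist p p' = δ


-- helpers
def sp (p : Pt d) : ℝ := Real.sqrt (∑ i : Fin d, p.1 i.castSucc ^ 2)

lemma sp_nonneg (p : Pt d) : 0 ≤ sp p := Real.sqrt_nonneg _

lemma sp_sq (p : Pt d) : sp p ^ 2 = ∑ i : Fin d, p.1 i.castSucc ^ 2 :=
  Real.sq_sqrt (Finset.sum_nonneg fun i _ => sq_nonneg _)

lemma tm_sq (p : Pt d) : p.1 (Fin.last d) ^ 2 = 1 + sp p ^ 2 := by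
  have h := p.2.1
  rw [sp_sq]
  unfold mink at h
  have h2 : ∑ i : Fin d, p.1 i.castSucc * p.1 i.castSucc = ∑ i : Fin d, p.1 i.castSucc ^ 2 :=
    Finset.sum_congr rfl fun i _ => (sq _).symm
  nlinarith [h, h2]

lemma sp_lt_tm (p : Pt d) : sp p < p.1 (Fin.last d) := by
  have h := tm_sq p
  have h2 := p.2.2
  nlinarith [sp_nonneg p]

lemma one_le_tm (p : Pt d) : 1 ≤ p.1 (Fin.last d) := by
  have h := tm_sq p
  nlinarith [p.2.2, sp_nonneg p]

lemma mink_symm (x y : EuclideanSpace ℝ (Fin (d+1))) : mink d x y = mink d y x := by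
  unfold mink; congr 1; · exact Finset.sum_congr rfl fun i _ => mul_comm _ _
  · ring

lemma hdist_symm (p q : Pt d) : hdist p q = hdist q p := by
  unfold hdist; rw [mink_symm]

lemma hdist_self (p : Pt d) : hdist p p = 0 := by
  unfold hdist
  have h : -(mink d p.1 p.1) = 1 := by rw [p.2.1]; ring
  rw [h]
  unfold arcosh
  norm_num

lemma cs (p q : Pt d) :
    |∑ i : Fin d, p.1 i.castSucc * q.1 i.castSucc| ≤ sp p * sp q := by
  have h := Finset.sum_mul_sq_le_sq_mul_sq Finset.univ (fun i : Fin d => p.1 i.castSucc)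
    (fun i : Fin d => q.1 i.castSucc)
  have h1 := sp_sq p; have h2 := sp_sq q
  have hnn : 0 ≤ sp p * sp q := mul_nonneg (sp_nonneg p) (sp_nonneg q)
  rw [abs_le]
  constructor <;> nlinarith

lemma mink_lower (p q : Pt d) :
    (p.1 (Fin.last d) - sp p) * q.1 (Fin.last d) ≤ -(mink d p.1 q.1) := by
  have h := cs p q
  have h2 := sp_lt_tm q
  have h3 := sp_nonneg p
  have h4 := q.2.2
  unfold mink
  rw [abs_le] at h
  nlinarith

lemma mink_upper (p q : Pt d) :
    -(mink d p.1 q.1) ≤ (p.1 (Fin.last d) + sp p) * q.1 (Fin.last d) := by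
  have h := cs p q
  have h2 := sp_lt_tm q
  have h3 := sp_nonneg p
  have h4 := q.2.2
  unfold mink
  rw [abs_le] at h
  nlinarith

lemma mink_pos (p q : Pt d) : 0 < -(mink d p.1 q.1) := by
  have h := mink_lower p q
  have := sp_lt_tm p
  have := q.2.2
  nlinarith

lemma log_le_arcosh {y : ℝ} (hy : 0 < y) : Real.log y ≤ arcosh y := by
  unfold arcosh
  exact Real.log_le_log hy (by nlinarith [Real.sqrt_nonneg (y^2-1)])

lemma arcosh_le {y B : ℝ} (hy : 0 < y) (hB : y ≤ B) (hB1 : 1 ≤ B) :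
    arcosh y ≤ Real.log (2 * B) := by
  unfold arcosh
  have hs : Real.sqrt (y ^ 2 - 1) ≤ B := by
    calc Real.sqrt (y^2-1) ≤ Real.sqrt (B^2) := by
          apply Real.sqrt_le_sqrt; nlinarith
      _ = B := by rw [Real.sqrt_sq (by linarith)]
  apply Real.log_le_log (by nlinarith [Real.sqrt_nonneg (y^2-1)])
  linarith

-- If hdist a p ≤ δ then timelike coordinate of p bounded
lemma tm_bound {a p : Pt d} {δ : ℝ} (h : hdist a p ≤ δ) :
    p.1 (Fin.last d) ≤ Real.exp δ / (a.1 (Fin.last d) - sp a) := by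
  have hpos := mink_pos a p
  have hlog : Real.log (-(mink d a.1 p.1)) ≤ δ := le_trans (log_le_arcosh hpos) h
  have hexp : -(mink d a.1 p.1) ≤ Real.exp δ := by
    calc -(mink d a.1 p.1) = Real.exp (Real.log (-(mink d a.1 p.1))) :=
          (Real.exp_log hpos).symm
      _ ≤ Real.exp δ := Real.exp_le_exp.mpr hlog
  have hl := mink_lower a p
  have hd : 0 < a.1 (Fin.last d) - sp a := by linarith [sp_lt_tm a]
  rw [le_div_iff₀ hd]
  nlinarith

-- the main bound: hdist x p ≤ K for p with hdist a p ≤ δ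
lemma hdist_bound {a p x : Pt d} {δ : ℝ} (h : hdist a p ≤ δ) :
    hdist x p ≤ Real.log (2 * max ((x.1 (Fin.last d) + sp x) *
      (Real.exp δ / (a.1 (Fin.last d) - sp a))) 1) := by
  set M := Real.exp δ / (a.1 (Fin.last d) - sp a) with hM
  set B := (x.1 (Fin.last d) + sp x) * M with hB
  have hpt : p.1 (Fin.last d) ≤ M := tm_bound h
  have hxp : -(mink d x.1 p.1) ≤ B := by
    have := mink_upper x p
    have hxpos : 0 < x.1 (Fin.last d) + sp x := by
      have := x.2.2; have := sp_nonneg x; linarith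
    calc -(mink d x.1 p.1) ≤ (x.1 (Fin.last d) + sp x) * p.1 (Fin.last d) := this
      _ ≤ B := by rw [hB]; exact mul_le_mul_of_nonneg_left hpt (le_of_lt hxpos)
  exact arcosh_le (mink_pos x p) (le_trans hxp (le_max_left _ _)) (le_max_right _ _)




/-- Claim 3: every bounded set of diameter `δ` is contained in a
complete set of diameter `δ`. -/
theorem exists_complete_superset {d : ℕ} (C : Set (Pt d)) (hne : C.Nonempty)
    (hbd : IsBddSet C) (δ : ℝ) (hδ : diam C = δ) :
    ∃ D : Set (Pt d), C ⊆ D ∧ CompleteSet D δ := by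
  unfold IsBddSet at hbd
  unfold CompleteSet diam
  unfold diam at hδ
  obtain ⟨a₀, ha₀⟩ := hne
  obtain ⟨R, hR⟩ := hbd
  have hbdd : BddAbove {r | ∃ a ∈ C, ∃ b ∈ C, hdist a b = r} := by
    refine ⟨R, ?_⟩
    rintro r ⟨a, ha, b, hb, rfl⟩
    exact hR a ha b hb
  have hdδ : 0 ≤ δ := by
    rw [← hδ]
    exact le_csSup hbdd ⟨a₀, ha₀, a₀, ha₀, hdist_self a₀⟩
  have hCδ : ∀ a ∈ C, ∀ b ∈ C, hdist a b ≤ δ := by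
    intro a ha b hb
    rw [← hδ]
    exact le_csSup hbdd ⟨a, ha, b, hb, rfl⟩
  set S : Set (Set (Pt d)) := {D | C ⊆ D ∧ ∀ a ∈ D, ∀ b ∈ D, hdist a b ≤ δ} with hS
  have hzorn : ∀ c ⊆ S, IsChain (· ⊆ ·) c → c.Nonempty →
      ∃ ub ∈ S, ∀ s ∈ c, s ⊆ ub := by
    intro c hcS hchain hcne
    refine ⟨⋃₀ c, ⟨?_, ?_⟩, fun s hs => Set.subset_sUnion_of_mem hs⟩
    · obtain ⟨t, ht⟩ := hcne
      exact (hcS ht).1.trans (Set.subset_sUnion_of_mem ht)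
    · rintro a ⟨s, hs, has⟩ b ⟨t, ht, hbt⟩
      rcases hchain.total hs ht with h | h
      · exact (hcS ht).2 a (h has) b hbt
      · exact (hcS hs).2 a has b (h hbt)
  obtain ⟨D, hCD, hDmax⟩ := zorn_subset_nonempty S hzorn C ⟨subset_rfl, hCδ⟩
  have hDS : D ∈ S := hDmax.1
  refine ⟨D, hCD, ?_, ?_⟩
  · apply le_antisymm
    · apply Real.sSup_le _ hdδ
      rintro r ⟨a, ha, b, hb, rfl⟩
      exact hDS.2 a ha b hb
    · rw [← hδ]
      apply csSup_le_csSup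
      · refine ⟨δ, ?_⟩
        rintro r ⟨a, ha, b, hb, rfl⟩
        exact hDS.2 a ha b hb
      · exact ⟨0, a₀, ha₀, a₀, ha₀, hdist_self a₀⟩
      · rintro r ⟨a, ha, b, hb, rfl⟩
        exact ⟨a, hCD ha, b, hCD hb, rfl⟩
  · intro x hx
    have hnot : D ∪ {x} ∉ S := by
      intro hmem
      exact hx (hDmax.2 hmem Set.subset_union_left (Or.inr rfl))
    have hex : ∃ a ∈ D ∪ {x}, ∃ b ∈ D ∪ {x}, δ < hdist a b := by
      by_contra h
      push_neg at h
      exact hnot ⟨hCD.trans Set.subset_union_left, h⟩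
    obtain ⟨a, ha, b, hb, hab⟩ := hex
    set K := Real.log (2 * max ((x.1 (Fin.last d) + sp x) *
      (Real.exp δ / (a₀.1 (Fin.last d) - sp a₀))) 1) with hK
    have hKb : ∀ p ∈ D, hdist x p ≤ K := fun p hp =>
      hdist_bound (hDS.2 a₀ (hCD ha₀) p hp)
    have hbdd2 : BddAbove {r | ∃ a ∈ D ∪ {x}, ∃ b ∈ D ∪ {x}, hdist a b = r} := by
      refine ⟨max δ (max K 0), ?_⟩
      rintro r ⟨u, hu, v, hv, rfl⟩
      rcases hu with hu | hu
      · rcases hv with hv | hv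
        · exact le_trans (hDS.2 u hu v hv) (le_max_left _ _)
        · rw [Set.mem_singleton_iff] at hv
          subst hv
          rw [hdist_symm]
          exact le_trans (hKb u hu) (le_trans (le_max_left _ _) (le_max_right _ _))
      · rw [Set.mem_singleton_iff] at hu
        subst hu
        rcases hv with hv | hv
        · exact le_trans (hKb v hv) (le_trans (le_max_left _ _) (le_max_right _ _))
        · rw [Set.mem_singleton_iff] at hv
          subst hv
          rw [hdist_self]
          exact le_trans (le_max_right _ _) (le_max_right _ _)
    calc δ < hdist a b := hab
      _ ≤ diam (D ∪ {x}) := le_csSup hbdd2 ⟨a, ha, b, hb, rfl⟩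



end HypSpace
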